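/- arXiv:math/0701732 — 2 statements merged into one kernel-verified Lean document; each statement's English description precedes it below -/
import Mathlib

section
/- Let ε > 0 and q ≥ 1. Then Σ_{k∈ℤⁿ} ( Σ_{k'∈ℤⁿ, k'≠0} |k'|^{−n/q−ε} (1+|k−k'|)^{−2n} )^q < ∞. -/
open MeasureTheory
open scoped Classical

set_option maxHeartbeats 1000000

noncomputable section

def latt {n : ℕ} (k : Fin n → ℤ) : EuclideanSpace ℝ (Fin n) := WithLp.toLp 2 (fun i => (k i : ℝ))

lemma latt_sub {n : ℕ} (a b : Fin n → ℤ) : latt (a - b) = latt a - latt b := by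
  ext i
  simp [latt]

lemma coord_le_norm_latt {n : ℕ} (m : Fin n → ℤ) (i : Fin n) :
    |(m i : ℝ)| ≤ ‖latt m‖ := by
  rw [EuclideanSpace.norm_eq, ← Real.sqrt_sq_eq_abs]
  apply Real.sqrt_le_sqrt
  have h : (m i : ℝ) ^ 2 = ‖latt m i‖ ^ 2 := by
    simp [latt, sq_abs]
  rw [h]
  exact Finset.single_le_sum (f := fun j => ‖latt m j‖ ^ 2)
    (fun j _ => sq_nonneg _) (Finset.mem_univ i)

lemma summable_int_aux {t : ℝ} (ht : 1 < t) :
    Summable (fun j : ℤ => (1 + (j.natAbs : ℝ)) ^ (-t)) := by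
  have hnat : Summable (fun n : ℕ => (1 + (n : ℝ)) ^ (-t)) := by
    have h : Summable (fun n : ℕ => ((n : ℝ)) ^ (-t)) :=
      Real.summable_nat_rpow.2 (by linarith)
    have h2 := h.comp_injective (add_right_injective 1)
    refine h2.congr fun m => ?_
    simp only [Function.comp_apply]
    congr 1
    push_cast
    ring
  apply Summable.of_nat_of_neg <;> simpa using hnat

lemma summable_pi_prod {n : ℕ} {g : ℤ → ℝ} (hg : Summable g) (hg0 : ∀ j, 0 ≤ g j) :
    Summable (fun m : Fin n → ℤ => ∏ i, g (m i)) := by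
  induction n with
  | zero =>
    simp only [Finset.univ_eq_empty, Finset.prod_empty]
    exact summable_of_finite_support (Set.toFinite _)
  | succ n ih =>
    have h : Summable (fun p : ℤ × (Fin n → ℤ) => g p.1 * ∏ i, g (p.2 i)) :=
      Summable.mul_of_nonneg (f := g) (g := fun m : Fin n → ℤ => ∏ i, g (m i)) hg ih
        (fun j => hg0 j) (fun m => Finset.prod_nonneg fun i _ => hg0 _)
    have key : (fun m : Fin (n+1) → ℤ => ∏ i, g (m i)) ∘ (Fin.consEquiv fun _ => ℤ)
        = fun p : ℤ × (Fin n → ℤ) => g p.1 * ∏ i, g (p.2 i) := by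
      funext p
      simp only [Function.comp_apply, Fin.consEquiv_apply, Fin.prod_univ_succ,
        Fin.cons_zero, Fin.cons_succ]
    exact ((Fin.consEquiv fun _ => ℤ).summable_iff).1 (by rw [key]; exact h)

lemma prod_bound {n : ℕ} {t : ℝ} (ht : 0 ≤ t) (m : Fin n → ℤ) :
    (1 + ‖latt m‖) ^ (-((n : ℝ) * t)) ≤ ∏ i, (1 + ((m i).natAbs : ℝ)) ^ (-t) := by
  have hx : (0 : ℝ) < 1 + ‖latt m‖ := by positivity
  have hstep : ∀ i, (1 + ‖latt m‖) ^ (-t) ≤ (1 + ((m i).natAbs : ℝ)) ^ (-t) := by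
    intro i
    apply Real.rpow_le_rpow_of_nonpos (by positivity) _ (by linarith)
    have h2 : ((m i).natAbs : ℝ) = |((m i : ℤ) : ℝ)| := by
      rw [Nat.cast_natAbs, Int.cast_abs]
    have h3 := coord_le_norm_latt m i
    rw [h2]
    linarith
  calc (1 + ‖latt m‖) ^ (-((n : ℝ) * t))
      = ∏ _i : Fin n, (1 + ‖latt m‖) ^ (-t) := by
        rw [Finset.prod_const, ← Real.rpow_natCast ((1 + ‖latt m‖) ^ (-t)) _,
          ← Real.rpow_mul hx.le]
        simp [mul_comm]
    _ ≤ ∏ i, (1 + ((m i).natAbs : ℝ)) ^ (-t) :=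
        Finset.prod_le_prod (fun i _ => Real.rpow_nonneg hx.le _) (fun i _ => hstep i)

lemma summable_decay {n : ℕ} {s : ℝ} (hs : (n : ℝ) < s) (hn : 0 < n) :
    Summable (fun m : Fin n → ℤ => (1 + ‖latt m‖) ^ (-s)) := by
  set t := s / n with htdef
  have hn' : (0 : ℝ) < n := by exact_mod_cast hn
  have ht : 1 < t := (one_lt_div hn').2 hs
  have hnt : (n : ℝ) * t = s := by rw [htdef]; field_simp
  apply Summable.of_nonneg_of_le (fun m => Real.rpow_nonneg (by positivity) _)
    (fun m => ?_) (summable_pi_prod (summable_int_aux ht) (fun j => Real.rpow_nonneg (by positivity) _))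
  rw [← hnt]
  exact prod_bound (by nlinarith) m

lemma one_le_norm_latt {n : ℕ} {m : Fin n → ℤ} (hm : m ≠ 0) : 1 ≤ ‖latt m‖ := by
  obtain ⟨i, hi⟩ : ∃ i, m i ≠ 0 := by
    by_contra h
    push_neg at h
    exact hm (funext h)
  refine le_trans ?_ (coord_le_norm_latt m i)
  have h1 : ((1 : ℤ) : ℝ) ≤ ((|m i| : ℤ) : ℝ) := by exact_mod_cast Int.one_le_abs hi
  rw [Int.cast_abs] at h1
  simpa using h1

lemma summable_ne_zero_decay {n : ℕ} {s : ℝ} (hs : (n : ℝ) < s) (hn : 0 < n) :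
    Summable (fun m : Fin n → ℤ => if m ≠ 0 then ‖latt m‖ ^ (-s) else 0) := by
  have hs0 : 0 ≤ s := le_trans (by positivity) hs.le
  apply Summable.of_nonneg_of_le
    (fun m => by split
                 · exact Real.rpow_nonneg (norm_nonneg _) _
                 · exact le_rfl)
    (fun m => ?_) (((summable_decay hs hn).mul_left ((2:ℝ) ^ s)))
  by_cases hm : m ≠ 0
  · rw [if_pos hm]
    have h1 : 1 ≤ ‖latt m‖ := one_le_norm_latt hm
    have h2 : (1 + ‖latt m‖) / 2 ≤ ‖latt m‖ := by linarith
    have h3 : ‖latt m‖ ^ (-s) ≤ ((1 + ‖latt m‖) / 2) ^ (-s) :=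
      Real.rpow_le_rpow_of_nonpos (by linarith) h2 (by linarith)
    refine h3.trans_eq ?_
    rw [Real.div_rpow (by linarith) (by norm_num), div_eq_mul_inv,
      ← Real.rpow_neg (by norm_num : (0:ℝ) ≤ 2), neg_neg, mul_comm]
  · rw [if_neg hm]
    positivity

/-- For `ε > 0` and `q ≥ 1`,
`Σ_{k∈ℤⁿ} ( Σ_{k'≠0} |k'|^{−n/q−ε} (1+|k−k'|)^{−2n} )^q < ∞`. -/
theorem stmt1 (n : ℕ) (hn : 0 < n) (ε q : ℝ) (hε : 0 < ε) (hq : 1 ≤ q) :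
    (∀ k : Fin n → ℤ, Summable (fun k' : Fin n → ℤ =>
        if k' ≠ 0 then
          ‖latt k'‖ ^ (-((n : ℝ) / q) - ε) * (1 + ‖latt k - latt k'‖) ^ (-(2 * (n : ℝ)))
        else 0)) ∧
    Summable (fun k : Fin n → ℤ =>
      (∑' k' : Fin n → ℤ,
        if k' ≠ 0 then
          ‖latt k'‖ ^ (-((n : ℝ) / q) - ε) * (1 + ‖latt k - latt k'‖) ^ (-(2 * (n : ℝ)))
        else 0) ^ q) := by
  have hq0 : (0 : ℝ) < q := lt_of_lt_of_le one_pos hq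
  have hn' : (0 : ℝ) < n := by exact_mod_cast hn
  set g : (Fin n → ℤ) → ℝ := fun m => (1 + ‖latt m‖) ^ (-(2 * (n : ℝ))) with hgdef
  set f : (Fin n → ℤ) → ℝ := fun k' =>
    if k' ≠ 0 then ‖latt k'‖ ^ (-((n : ℝ) / q) - ε) else 0 with hfdef
  set h : (Fin n → ℤ) → ℝ := fun k' =>
    if k' ≠ 0 then ‖latt k'‖ ^ (-((n : ℝ) + ε * q)) else 0 with hhdef
  have hg0 : ∀ m, 0 ≤ g m := fun m => Real.rpow_nonneg (by positivity) _
  have hf0 : ∀ m, 0 ≤ f m := by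
    intro m
    simp only [hfdef]
    split
    · exact Real.rpow_nonneg (norm_nonneg _) _
    · exact le_rfl
  have hh0 : ∀ m, 0 ≤ h m := by
    intro m
    simp only [hhdef]
    split
    · exact Real.rpow_nonneg (norm_nonneg _) _
    · exact le_rfl
  have hg : Summable g := summable_decay (by nlinarith) hn
  have hh : Summable h := summable_ne_zero_decay (by nlinarith) hn
  -- rewrite the summand
  have hsummand : ∀ k k' : Fin n → ℤ,
      (if k' ≠ 0 then
          ‖latt k'‖ ^ (-((n : ℝ) / q) - ε) * (1 + ‖latt k - latt k'‖) ^ (-(2 * (n : ℝ)))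
        else 0) = f k' * g (k - k') := by
    intro k k'
    by_cases hk : k' = 0 <;> simp [hk, hgdef, hfdef, latt_sub]
  -- f bounded by 1
  have hf_le_one : ∀ m, f m ≤ 1 := by
    intro m
    simp only [hfdef]
    split
    · apply Real.rpow_le_one_of_one_le_of_nonpos (one_le_norm_latt (by assumption))
      have : 0 ≤ (n : ℝ) / q := by positivity
      linarith
    · norm_num
  -- f ^ q = h
  have hfq : ∀ m, f m ^ q = h m := by
    intro m
    simp only [hfdef, hhdef]
    split
    · rw [← Real.rpow_mul (norm_nonneg _)]
      congr 1
      field_simp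
      ring
    · exact Real.zero_rpow (ne_of_gt hq0)
  -- summability of shifted g
  have hgsub : ∀ k : Fin n → ℤ, Summable (fun k' => g (k - k')) := by
    intro k
    exact (Equiv.subLeft k).summable_iff.2 hg
  -- part 1 summability
  have part1 : ∀ k : Fin n → ℤ, Summable (fun k' => f k' * g (k - k')) := by
    intro k
    exact Summable.of_nonneg_of_le (fun k' => mul_nonneg (hf0 _) (hg0 _))
      (fun k' => mul_le_of_le_one_left (hg0 _) (hf_le_one _)) (hgsub k)
  -- double sum summability
  have hF : Summable (fun p : (Fin n → ℤ) × (Fin n → ℤ) => h p.2 * g (p.1 - p.2)) := by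
    have base : Summable (fun p : (Fin n → ℤ) × (Fin n → ℤ) => h p.1 * g p.2) :=
      Summable.mul_of_nonneg (f := h) (g := g) hh hg (fun m => hh0 m) (fun m => hg0 m)
    let φ : ((Fin n → ℤ) × (Fin n → ℤ)) ≃ ((Fin n → ℤ) × (Fin n → ℤ)) :=
      ⟨fun p => (p.2, p.1 - p.2), fun p => (p.2 + p.1, p.1),
        fun p => by obtain ⟨a, b⟩ := p; simp, fun p => by obtain ⟨a, b⟩ := p; simp⟩
    exact φ.summable_iff.2 base
  have hpair := (summable_prod_of_nonneg
    (fun p => mul_nonneg (hh0 _) (hg0 _))).1 hF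
  have hslice : ∀ k : Fin n → ℤ, Summable fun k' => h k' * g (k - k') := hpair.1
  have hT : Summable fun k : Fin n → ℤ => ∑' k', h k' * g (k - k') := hpair.2
  set B : ℝ := ∑' m, g m with hBdef
  have hB0 : 0 ≤ B := tsum_nonneg fun m => hg0 m
  have hqi : q⁻¹ ≤ 1 := by rw [← one_div]; exact (div_le_one hq0).2 hq
  -- Hoelder inequality per k
  have holder : ∀ k : Fin n → ℤ, (∑' k', f k' * g (k - k')) ≤
      B ^ (1 - q⁻¹) * (∑' k', h k' * g (k - k')) ^ q⁻¹ := by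
    intro k
    apply Summable.tsum_le_of_sum_le (part1 k)
    intro s
    have step1 : ∑ k' ∈ s, f k' * g (k - k')
        = ∑ k' ∈ s, g (k - k') * f k' :=
      Finset.sum_congr rfl fun _ _ => mul_comm _ _
    rw [step1]
    refine le_trans (Real.inner_le_weight_mul_Lp_of_nonneg s hq
      (fun k' => g (k - k')) f (fun i => hg0 _) hf0) ?_
    have t1 : ∑ k' ∈ s, g (k - k') ≤ B := by
      have := Summable.sum_le_tsum s (fun i _ => hg0 _) (hgsub k)
      calc ∑ k' ∈ s, g (k - k') ≤ ∑' k', g (k - k') := this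
        _ = B := (Equiv.subLeft k).tsum_eq g
    have t2 : ∑ k' ∈ s, g (k - k') * f k' ^ q ≤ ∑' k', h k' * g (k - k') := by
      calc ∑ k' ∈ s, g (k - k') * f k' ^ q
          = ∑ k' ∈ s, h k' * g (k - k') :=
            Finset.sum_congr rfl fun k' _ => by rw [hfq, mul_comm]
        _ ≤ ∑' k', h k' * g (k - k') :=
            Summable.sum_le_tsum s (fun i _ => mul_nonneg (hh0 _) (hg0 _)) (hslice k)
    exact mul_le_mul
      (Real.rpow_le_rpow (Finset.sum_nonneg fun i _ => hg0 _) t1 (by linarith))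
      (Real.rpow_le_rpow (Finset.sum_nonneg fun i _ =>
        mul_nonneg (hg0 _) (Real.rpow_nonneg (hf0 _) _)) t2 (by positivity))
      (Real.rpow_nonneg (Finset.sum_nonneg fun i _ =>
        mul_nonneg (hg0 _) (Real.rpow_nonneg (hf0 _) _)) _)
      (Real.rpow_nonneg hB0 _)
  -- key pointwise bound
  have key : ∀ k : Fin n → ℤ, (∑' k', f k' * g (k - k')) ^ q
      ≤ B ^ (q - 1) * (∑' k', h k' * g (k - k')) := by
    intro k
    have hS0 : 0 ≤ ∑' k', f k' * g (k - k') :=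
      tsum_nonneg fun _ => mul_nonneg (hf0 _) (hg0 _)
    have hT0 : 0 ≤ ∑' k', h k' * g (k - k') :=
      tsum_nonneg fun _ => mul_nonneg (hh0 _) (hg0 _)
    have hexp : (1 - q⁻¹) * q = q - 1 := by field_simp
    calc (∑' k', f k' * g (k - k')) ^ q
        ≤ (B ^ (1 - q⁻¹) * (∑' k', h k' * g (k - k')) ^ q⁻¹) ^ q :=
          Real.rpow_le_rpow hS0 (holder k) hq0.le
      _ = B ^ (q - 1) * (∑' k', h k' * g (k - k')) := by
          rw [Real.mul_rpow (Real.rpow_nonneg hB0 _) (Real.rpow_nonneg hT0 _),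
            ← Real.rpow_mul hB0, ← Real.rpow_mul hT0, hexp,
            inv_mul_cancel₀ (ne_of_gt hq0), Real.rpow_one]
  constructor
  · intro k
    simpa only [hsummand] using part1 k
  · apply Summable.of_nonneg_of_le (fun k => ?_) (fun k => ?_)
      (hT.mul_left (B ^ (q - 1)))
    · simp only [hsummand]
      exact Real.rpow_nonneg (tsum_nonneg fun _ => mul_nonneg (hf0 _) (hg0 _)) _
    · simp only [hsummand]
      exact key k
end
end

section
/- Let Φ, Ψ ∈ 𝒮(ℝⁿ) with FΦ = φ, FΨ = ψ, where supp φ ⊂ {|ξ|≤1/8}, ∫φ = 1, φ radial, supp ψ ⊂ {|ξ|≤1/2}, ψ = 1 on {|ξ|≤1/4}. Then for every k ∈ ℤⁿ and every λ ≥ 8√n, ∫_{ℝⁿ} Φ(λx−k) Ψ(λx−k) F^{−1}B(x) dx = (2π)^{−2n} λ^{−n} ∏_{i=1}^n (sin(k_i/(2λ))/(k_i/(2λ)))², where B is the tensor-product B-spline of degree 2. -/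
open MeasureTheory Real

noncomputable section

/-- `sin x / x`, extended by `1` at `x = 0`. -/
def sinc (x : ℝ) : ℝ := if x = 0 then 1 else Real.sin x / x

/-- The B-spline of degree 2 on `ℝ`. -/
def Bspline1 (s : ℝ) : ℝ :=
  ∫ u : ℝ, Set.indicator (Set.Icc (-(1 : ℝ) / 2) (1 / 2)) (fun _ => (1 : ℝ)) u *
    Set.indicator (Set.Icc (-(1 : ℝ) / 2) (1 / 2)) (fun _ => (1 : ℝ)) (s - u)

/-- The tensor-product B-spline on `ℝⁿ`. -/
def Bspline (n : ℕ) (t : EuclideanSpace ℝ (Fin n)) : ℝ := ∏ i, Bspline1 (t i)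


lemma bspline1_eq (s : ℝ) : Bspline1 s = max (1 - |s|) 0 := by
  have key : ∀ u : ℝ, Set.indicator (Set.Icc (-(1 : ℝ) / 2) (1 / 2)) (fun _ => (1 : ℝ)) u *
      Set.indicator (Set.Icc (-(1 : ℝ) / 2) (1 / 2)) (fun _ => (1 : ℝ)) (s - u)
      = Set.indicator (Set.Icc (-(1:ℝ)/2) (1/2) ∩ Set.Icc (s - 1/2) (s + 1/2))
          (fun _ => (1:ℝ)) u := by
    intro u
    have h2 : Set.indicator (Set.Icc (-(1 : ℝ) / 2) (1 / 2)) (fun _ => (1 : ℝ)) (s - u)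
        = Set.indicator (Set.Icc (s - 1/2) (s + 1/2)) (fun _ => (1:ℝ)) u := by
      by_cases h : s - u ∈ Set.Icc (-(1:ℝ)/2) (1/2)
      · rw [Set.indicator_of_mem h, Set.indicator_of_mem]
        simp only [Set.mem_Icc] at h ⊢; constructor <;> linarith [h.1, h.2]
      · rw [Set.indicator_of_notMem h, Set.indicator_of_notMem]
        simp only [Set.mem_Icc] at h ⊢; intro hc
        exact h ⟨by linarith [hc.1, hc.2], by linarith [hc.1, hc.2]⟩
    rw [h2, ← Set.inter_indicator_mul]
    simp
  unfold Bspline1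
  simp only [key]
  rw [integral_indicator_const _ ((measurableSet_Icc).inter measurableSet_Icc)]
  rw [Set.Icc_inter_Icc, Real.volume_real_Icc]
  have habs : ∀ x : ℝ, (ENNReal.ofReal x).toReal = max x 0 := by
    intro x
    rcases le_total 0 x with h|h
    · rw [ENNReal.toReal_ofReal h, max_eq_left h]
    · rw [ENNReal.ofReal_of_nonpos h, max_eq_right h]; rfl
  rw [smul_eq_mul, mul_one]
  rcases le_total 0 s with hs|hs
  · rw [abs_of_nonneg hs, inf_eq_left.2 (by linarith : (1:ℝ)/2 ≤ s + 1/2),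
      sup_eq_right.2 (by linarith : -(1:ℝ)/2 ≤ s - 1/2)]
    congr 1; ring
  · rw [abs_of_nonpos hs, inf_eq_right.2 (by linarith : s + 1/2 ≤ (1:ℝ)/2),
      sup_eq_left.2 (by linarith : s - 1/2 ≤ -(1:ℝ)/2)]
    congr 1; ring

lemma bspline1_nonneg (s : ℝ) : 0 ≤ Bspline1 s := by rw [bspline1_eq]; exact le_max_right _ _

lemma bspline1_le_one (s : ℝ) : Bspline1 s ≤ 1 := by
  rw [bspline1_eq]; exact max_le (by linarith [abs_nonneg s]) zero_le_one

lemma bspline1_zero {s : ℝ} (h : 1 ≤ |s|) : Bspline1 s = 0 := by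
  rw [bspline1_eq, max_eq_right (by linarith)]

lemma bspline1_continuous : Continuous Bspline1 := by
  have : Bspline1 = fun s => max (1 - |s|) 0 := funext bspline1_eq
  rw [this]; exact (continuous_const.sub continuous_abs).max continuous_const

lemma bspline1_hcs : HasCompactSupport Bspline1 := by
  apply HasCompactSupport.intro (isCompact_Icc (a := (-1:ℝ)) (b := 1))
  intro x hx
  simp only [Set.mem_Icc, not_and_or, not_le] at hx
  exact bspline1_zero (le_of_lt (by
    rcases hx with h|h <;> [rw [abs_of_neg (by linarith)]; rw [abs_of_pos (by linarith)]] <;> linarith))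

lemma bspline1_integrable : Integrable Bspline1 :=
  bspline1_continuous.integrable_of_hasCompactSupport bspline1_hcs

open Complex in
lemma bspline1_fourier (a : ℝ) :
    ∫ s : ℝ, (Bspline1 s : ℂ) * Complex.exp (Complex.I * a * s)
      = (((_root_.sinc (a/2))^2 : ℝ) : ℂ) := by
  have hcont : Continuous fun s : ℝ => (Bspline1 s : ℂ) * Complex.exp (I * a * s) :=
    (Complex.continuous_ofReal.comp bspline1_continuous).mul
      (Complex.continuous_exp.comp (continuous_const.mul Complex.continuous_ofReal))
  have hzero : ∀ s ∉ Set.Ioc (-1:ℝ) 1, (Bspline1 s : ℂ) * Complex.exp (I*a*s) = 0 := by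
    intro s hs
    have hB : Bspline1 s = 0 := by
      apply bspline1_zero
      simp only [Set.mem_Ioc, not_and_or, not_lt, not_le] at hs
      rcases hs with h|h
      · rw [abs_of_nonpos (by linarith)]; linarith
      · rw [abs_of_pos (by linarith)]; linarith
    simp [hB]
  rw [← MeasureTheory.setIntegral_eq_integral_of_forall_compl_eq_zero hzero,
    ← intervalIntegral.integral_of_le (by norm_num : (-1:ℝ) ≤ 1),
    ← intervalIntegral.integral_add_adjacent_intervals (a := (-1:ℝ)) (b := 0) (c := 1)
      (hcont.intervalIntegrable _ _) (hcont.intervalIntegrable _ _)]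
  have hL : (∫ s in (-1:ℝ)..0, (Bspline1 s : ℂ) * Complex.exp (I*a*s))
      = ∫ s in (-1:ℝ)..0, (1 + (s:ℂ)) * Complex.exp (I*a*s) := by
    apply intervalIntegral.integral_congr
    intro s hs
    rw [Set.uIcc_of_le (by norm_num : (-1:ℝ) ≤ 0), Set.mem_Icc] at hs
    dsimp only
    rw [bspline1_eq, abs_of_nonpos hs.2, max_eq_left (by linarith [hs.1])]
    push_cast; ring_nf
  have hR : (∫ s in (0:ℝ)..1, (Bspline1 s : ℂ) * Complex.exp (I*a*s))
      = ∫ s in (0:ℝ)..1, (1 - (s:ℂ)) * Complex.exp (I*a*s) := by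
    apply intervalIntegral.integral_congr
    intro s hs
    rw [Set.uIcc_of_le (by norm_num : (0:ℝ) ≤ 1), Set.mem_Icc] at hs
    dsimp only
    rw [bspline1_eq, _root_.abs_of_nonneg hs.1, max_eq_left (by linarith [hs.2])]
    push_cast; ring_nf
  rw [hL, hR]
  by_cases ha : a = 0
  · subst ha
    simp only [Complex.ofReal_zero, mul_zero, zero_mul, Complex.exp_zero, mul_one]
    have l1 : (∫ s in (-1:ℝ)..0, (1 + (s:ℂ))) = 1/2 := by
      have : (fun s : ℝ => 1 + (s:ℂ)) = fun s : ℝ => ((1 + s : ℝ) : ℂ) := by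
        funext s; push_cast; ring
      rw [this, intervalIntegral.integral_ofReal]
      norm_num [intervalIntegral.integral_add intervalIntegrable_const intervalIntegral.intervalIntegrable_id]
    have l2 : (∫ s in (0:ℝ)..1, (1 - (s:ℂ))) = 1/2 := by
      have : (fun s : ℝ => 1 - (s:ℂ)) = fun s : ℝ => ((1 - s : ℝ) : ℂ) := by
        funext s; push_cast; ring
      rw [this, intervalIntegral.integral_ofReal]
      norm_num [intervalIntegral.integral_sub intervalIntegrable_const intervalIntegral.intervalIntegrable_id]
    rw [l1, l2]
    norm_num [_root_.sinc]
  · have ha' : (a:ℂ) ≠ 0 := Complex.ofReal_ne_zero.2 ha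
    have hIa : (I * (a:ℂ)) ≠ 0 := mul_ne_zero I_ne_zero ha'
    have lemR : ∫ s in (0:ℝ)..1, (1 - (s:ℂ)) * Complex.exp (Complex.I * a * s)
        = Complex.exp (I*a) / (I*a)^2 - 1/(I*a) - 1/(I*a)^2 := by
      have hG : ∀ x : ℝ, HasDerivAt (fun s : ℝ => (1 - (s:ℂ)) * Complex.exp (I*a*s) / (I*a)
          + Complex.exp (I*a*s) / (I*a)^2)
          ((1 - (x:ℂ)) * Complex.exp (I*a*x)) x := by
        intro x
        have hre : HasDerivAt (fun s : ℝ => (s:ℂ)) 1 x := (hasDerivAt_id x).ofReal_comp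
        have hlin : HasDerivAt (fun s : ℝ => I*(a:ℂ)*s) (I*a) x := by
          simpa using (hre.const_mul (I*(a:ℂ)))
        have he : HasDerivAt (fun s : ℝ => Complex.exp (I*a*s))
            (Complex.exp (I*a*x) * (I*a)) x := hlin.cexp
        have h1 : HasDerivAt (fun s : ℝ => (1 - (s:ℂ))) (-1) x := by
          exact hre.const_sub 1
        have := ((h1.mul he).div_const (I*a)).add (he.div_const ((I*a)^2))
        refine this.congr_deriv ?_
        field_simp
        ring
      rw [intervalIntegral.integral_eq_sub_of_hasDerivAt (fun x _ => hG x)]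
      · push_cast
        rw [mul_zero, mul_one, Complex.exp_zero]
        field_simp
        ring
      · apply Continuous.intervalIntegrable
        exact (continuous_const.sub Complex.continuous_ofReal).mul
          (Complex.continuous_exp.comp (continuous_const.mul Complex.continuous_ofReal))
    have lemL : ∫ s in (-1:ℝ)..0, (1 + (s:ℂ)) * Complex.exp (Complex.I * a * s)
        = 1/(I*a) - 1/(I*a)^2 + Complex.exp (-(I*a)) / (I*a)^2 := by
      have hG : ∀ x : ℝ, HasDerivAt (fun s : ℝ => (1 + (s:ℂ)) * Complex.exp (I*a*s) / (I*a)
          - Complex.exp (I*a*s) / (I*a)^2)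
          ((1 + (x:ℂ)) * Complex.exp (I*a*x)) x := by
        intro x
        have hre : HasDerivAt (fun s : ℝ => (s:ℂ)) 1 x := (hasDerivAt_id x).ofReal_comp
        have hlin : HasDerivAt (fun s : ℝ => I*(a:ℂ)*s) (I*a) x := by
          simpa using (hre.const_mul (I*(a:ℂ)))
        have he : HasDerivAt (fun s : ℝ => Complex.exp (I*a*s))
            (Complex.exp (I*a*x) * (I*a)) x := hlin.cexp
        have h1 : HasDerivAt (fun s : ℝ => (1 + (s:ℂ))) 1 x := by
          exact hre.const_add 1
        have := ((h1.mul he).div_const (I*a)).sub (he.div_const ((I*a)^2))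
        refine this.congr_deriv ?_
        field_simp
        ring
      rw [intervalIntegral.integral_eq_sub_of_hasDerivAt (fun x _ => hG x)]
      · push_cast
        rw [mul_zero, Complex.exp_zero]
        have hm1 : Complex.I * ↑a * (-1) = -(I*a) := by ring
        rw [hm1]
        field_simp
        ring
      · apply Continuous.intervalIntegrable
        exact (continuous_const.add Complex.continuous_ofReal).mul
          (Complex.continuous_exp.comp (continuous_const.mul Complex.continuous_ofReal))
    rw [lemL, lemR]
    -- algebra
    have h2 : a/2 ≠ 0 := div_ne_zero ha two_ne_zero
    have hr : Real.sin (a/2)^2 = (1 - Real.cos a)/2 := by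
      have h1 := Real.cos_two_mul' (a/2)
      have hpa : 2*(a/2) = a := by ring
      rw [hpa] at h1
      have hpy := Real.sin_sq_add_cos_sq (a/2)
      linarith
    have hs2 : (Complex.sin ((a:ℂ)/2))^2 = (1 - Complex.cos ↑a)/2 := by
      have := congrArg (fun x : ℝ => (x:ℂ)) hr
      push_cast at this
      exact this
    have e1 : Complex.exp (I*(a:ℂ)) = Complex.cos a + Complex.sin a * I := by
      rw [mul_comm, Complex.exp_mul_I]
    have e2 : Complex.exp (-(I*(a:ℂ))) = Complex.cos a - Complex.sin a * I := by
      rw [show -(I*(a:ℂ)) = (-(a:ℂ))*I by ring, Complex.exp_mul_I, Complex.cos_neg,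
        Complex.sin_neg]
      ring
    have hsq : (I*(a:ℂ))^2 = -(↑a^2) := by rw [mul_pow, Complex.I_sq]; ring
    have step : (1/(I*(a:ℂ)) - 1/(I*a)^2 + Complex.exp (-(I*(a:ℂ))) / (I*a)^2)
        + (Complex.exp (I*(a:ℂ)) / (I*a)^2 - 1/(I*a) - 1/(I*a)^2)
        = (2*Complex.cos ↑a - 2) / (-(↑a^2)) := by
      rw [e1, e2, hsq]; ring
    rw [step, _root_.sinc, if_neg h2]
    push_cast
    rw [div_pow, hs2]
    field_simp
    ring

lemma intB (n : ℕ) (x : EuclideanSpace ℝ (Fin n)) :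
    ∫ ξ : EuclideanSpace ℝ (Fin n),
      Complex.exp (Complex.I * ((inner ℝ x ξ : ℝ) : ℂ)) * (Bspline n ξ : ℂ)
    = ∏ i, (((_root_.sinc (x i / 2))^2 : ℝ) : ℂ) := by
  have key : ∀ ξ : EuclideanSpace ℝ (Fin n),
      Complex.exp (Complex.I * ((inner ℝ x ξ : ℝ) : ℂ)) * (Bspline n ξ : ℂ)
      = ∏ i, ((Bspline1 (ξ i) : ℂ) * Complex.exp (Complex.I * (x i) * (ξ i))) := by
    intro ξ
    have hinner : (inner ℝ x ξ : ℝ) = ∑ i, x i * ξ i := by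
      simp [PiLp.inner_apply, RCLike.inner_apply, map_sum, mul_comm]
    rw [hinner, Bspline]
    push_cast
    rw [Finset.mul_sum, Complex.exp_sum, Finset.prod_mul_distrib]
    rw [mul_comm]
    congr 1
    apply Finset.prod_congr rfl
    intro i _
    ring_nf
  simp only [key]
  have hmp := (EuclideanSpace.volume_preserving_symm_measurableEquiv_toLp (Fin n)).symm
  rw [← hmp.integral_comp (MeasurableEquiv.toLp 2 (Fin n → ℝ)).symm.symm.measurableEmbedding]
  have hco : ∀ y : Fin n → ℝ, ∀ i, ((MeasurableEquiv.toLp 2 (Fin n → ℝ)).symm.symm y) i = y i :=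
    fun y i => rfl
  simp only [hco]
  rw [MeasureTheory.integral_fintype_prod_volume_eq_prod
    (f := fun i t => (Bspline1 t : ℂ) * Complex.exp (Complex.I * (x i) * t))]
  exact Finset.prod_congr rfl fun i _ => bspline1_fourier (x i)

lemma bspline_integrable (n : ℕ) : Integrable (Bspline n) := by
  have hG : Integrable (fun y : Fin n → ℝ => ∏ i, Bspline1 (y i)) :=
    Integrable.fintype_prod (fun _ => bspline1_integrable)
  have hmp := EuclideanSpace.volume_preserving_symm_measurableEquiv_toLp (Fin n)
  have hGm : AEStronglyMeasurable (fun y : Fin n → ℝ => ∏ i, Bspline1 (y i)) volume :=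
    hG.aestronglyMeasurable
  exact (hmp.integrable_comp hGm).2 hG

lemma bspline_continuous (n : ℕ) : Continuous (Bspline n) := by
  apply continuous_finset_prod
  intro i _
  exact bspline1_continuous.comp (EuclideanSpace.proj (𝕜 := ℝ) i).continuous

lemma bspline_norm_le (n : ℕ) (ξ : EuclideanSpace ℝ (Fin n)) (h : Bspline n ξ ≠ 0) :
    ‖ξ‖ ≤ Real.sqrt n := by
  have hcoord : ∀ i, |ξ i| ≤ 1 := by
    intro i
    by_contra hi
    push_neg at hi
    exact h (Finset.prod_eq_zero (Finset.mem_univ i) (bspline1_zero hi.le))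
  rw [EuclideanSpace.norm_eq]
  have hsum : (∑ i, ‖ξ i‖^2) ≤ (n:ℝ) := by
    calc (∑ i, ‖ξ i‖^2) ≤ ∑ _i : Fin n, (1:ℝ) := by
          apply Finset.sum_le_sum
          intro i _
          rw [Real.norm_eq_abs]
          nlinarith [hcoord i, abs_nonneg (ξ i)]
    _ = n := by simp
  calc Real.sqrt (∑ i, ‖ξ i‖^2) ≤ Real.sqrt n := Real.sqrt_le_sqrt hsum

lemma norm_exp_I_real (t : ℝ) : ‖Complex.exp (Complex.I * t)‖ = 1 := by
  rw [mul_comm]; exact Complex.norm_exp_ofReal_mul_I t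

section conv
variable {n : ℕ} (Φ : SchwartzMap (EuclideanSpace ℝ (Fin n)) ℂ)
  (φ : EuclideanSpace ℝ (Fin n) → ℂ)

lemma phi_eq_fourier
    (hφ : ∀ ξ, φ ξ = ∫ t : EuclideanSpace ℝ (Fin n),
      Complex.exp (-Complex.I * ((inner ℝ ξ t : ℝ) : ℂ)) * Φ t) (ξ : EuclideanSpace ℝ (Fin n)) :
    φ ξ = FourierTransform.fourier (⇑Φ : EuclideanSpace ℝ (Fin n) → ℂ) ((2*π)⁻¹ • ξ) := by
  rw [Real.fourier_eq, hφ ξ]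
  congr 1
  funext v
  rw [Circle.smul_def, Real.fourierChar_apply, smul_eq_mul]
  congr 1
  have h1 : (inner ℝ v ((2*π)⁻¹ • ξ) : ℝ) = (2*π)⁻¹ * (inner ℝ ξ v : ℝ) := by
    rw [real_inner_smul_right, real_inner_comm]
  rw [h1]
  have h2 : 2 * π * -((2*π)⁻¹ * (inner ℝ ξ v : ℝ)) = -(inner ℝ ξ v : ℝ) := by
    field_simp
  rw [h2]
  push_cast
  ring

lemma phi_cont
    (hφ : ∀ ξ, φ ξ = ∫ t : EuclideanSpace ℝ (Fin n),
      Complex.exp (-Complex.I * ((inner ℝ ξ t : ℝ) : ℂ)) * Φ t) : Continuous φ := by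
  have : φ = fun ξ => (SchwartzMap.fourierTransformCLM ℝ Φ) ((2*π)⁻¹ • ξ) := by
    funext ξ
    rw [phi_eq_fourier Φ φ hφ ξ, SchwartzMap.fourierTransformCLM_apply, SchwartzMap.fourier_coe]
  rw [this]
  exact (SchwartzMap.fourierTransformCLM ℝ Φ).continuous.comp (continuous_const_smul ((2*π)⁻¹))

lemma phi_hcs (hφsupp : ∀ ξ, 1 / 8 < ‖ξ‖ → φ ξ = 0) : HasCompactSupport φ := by
  apply HasCompactSupport.intro (isCompact_closedBall (0 : EuclideanSpace ℝ (Fin n)) (1/8))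
  intro x hx
  rw [Metric.mem_closedBall, dist_zero_right, not_le] at hx
  exact hφsupp x hx

lemma phi_integrable
    (hφ : ∀ ξ, φ ξ = ∫ t : EuclideanSpace ℝ (Fin n),
      Complex.exp (-Complex.I * ((inner ℝ ξ t : ℝ) : ℂ)) * Φ t)
    (hφsupp : ∀ ξ, 1 / 8 < ‖ξ‖ → φ ξ = 0) : Integrable φ :=
  (phi_cont Φ φ hφ).integrable_of_hasCompactSupport (phi_hcs φ hφsupp)

lemma phi_inversion
    (hφ : ∀ ξ, φ ξ = ∫ t : EuclideanSpace ℝ (Fin n),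
      Complex.exp (-Complex.I * ((inner ℝ ξ t : ℝ) : ℂ)) * Φ t)
    (hφsupp : ∀ ξ, 1 / 8 < ‖ξ‖ → φ ξ = 0) (z : EuclideanSpace ℝ (Fin n)) :
    Φ z = (((2*π)^n : ℝ)⁻¹ : ℂ) *
      ∫ w : EuclideanSpace ℝ (Fin n), Complex.exp (Complex.I * ((inner ℝ z w : ℝ):ℂ)) * φ w := by
  have h2pi : (0:ℝ) < 2*π := by positivity
  have hfour : ∀ v, FourierTransform.fourier (⇑Φ : EuclideanSpace ℝ (Fin n) → ℂ) v = φ ((2*π) • v) := by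
    intro v
    rw [phi_eq_fourier Φ φ hφ ((2*π) • v), smul_smul, inv_mul_cancel₀ h2pi.ne', one_smul]
  have hFint : Integrable (FourierTransform.fourier (⇑Φ : EuclideanSpace ℝ (Fin n) → ℂ)) := by
    have := SchwartzMap.integrable (SchwartzMap.fourierTransformCLM ℝ Φ) (μ := volume)
    simpa [SchwartzMap.fourierTransformCLM_apply, SchwartzMap.fourier_coe] using this
  have hinv := Continuous.fourierInv_fourier_eq Φ.continuous (Φ.integrable) hFint
  have step1 : Φ z = ∫ v : EuclideanSpace ℝ (Fin n),
      Complex.exp (Complex.I * ((inner ℝ z ((2*π) • v) : ℝ):ℂ)) * φ ((2*π) • v) := by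
    conv_lhs => rw [← hinv]
    rw [Real.fourierInv_eq]
    congr 1
    funext v
    rw [hfour v, Circle.smul_def, Real.fourierChar_apply, smul_eq_mul]
    congr 1
    have h1 : (inner ℝ z ((2*π) • v) : ℝ) = 2*π * (inner ℝ v z : ℝ) := by
      rw [real_inner_smul_right, real_inner_comm]
    rw [h1]
    push_cast
    ring
  rw [step1]
  rw [MeasureTheory.Measure.integral_comp_smul volume
    (fun w => Complex.exp (Complex.I * ((inner ℝ z w : ℝ):ℂ)) * φ w) (2*π)]
  rw [finrank_euclideanSpace_fin, abs_of_pos (by positivity : (0:ℝ) < ((2*π)^n)⁻¹),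
    Complex.real_smul]
  push_cast
  ring
end conv

section conv2
variable {n : ℕ} (Φ Ψ : SchwartzMap (EuclideanSpace ℝ (Fin n)) ℂ)
  (φ ψ : EuclideanSpace ℝ (Fin n) → ℂ)

lemma conv_one
    (hφ : ∀ ξ, φ ξ = ∫ t : EuclideanSpace ℝ (Fin n),
      Complex.exp (-Complex.I * ((inner ℝ ξ t : ℝ) : ℂ)) * Φ t)
    (hψ : ∀ ξ, ψ ξ = ∫ t : EuclideanSpace ℝ (Fin n),
      Complex.exp (-Complex.I * ((inner ℝ ξ t : ℝ) : ℂ)) * Ψ t)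
    (hφsupp : ∀ ξ, 1 / 8 < ‖ξ‖ → φ ξ = 0)
    (hφint : (∫ ξ : EuclideanSpace ℝ (Fin n), φ ξ) = 1)
    (hψone : ∀ ξ : EuclideanSpace ℝ (Fin n), ‖ξ‖ ≤ 1 / 4 → ψ ξ = 1)
    (ζ : EuclideanSpace ℝ (Fin n)) (hζ : ‖ζ‖ ≤ 1/8) :
    ∫ z : EuclideanSpace ℝ (Fin n),
        Φ z * Ψ z * Complex.exp (Complex.I * ((inner ℝ z ζ : ℝ) : ℂ))
      = (((2*π)^n : ℝ)⁻¹ : ℂ) := by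
  have hφc : Continuous φ := phi_cont Φ φ hφ
  have hφi : Integrable φ := phi_integrable Φ φ hφ hφsupp
  -- rewrite Φ z by inversion
  have step1 : (∫ z : EuclideanSpace ℝ (Fin n),
      Φ z * Ψ z * Complex.exp (Complex.I * ((inner ℝ z ζ : ℝ) : ℂ)))
      = (((2*π)^n : ℝ)⁻¹ : ℂ) * ∫ z : EuclideanSpace ℝ (Fin n),
          ∫ w : EuclideanSpace ℝ (Fin n),
            Complex.exp (Complex.I * ((inner ℝ z w : ℝ):ℂ)) * φ w
              * (Ψ z * Complex.exp (Complex.I * ((inner ℝ z ζ : ℝ) : ℂ))) := by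
    rw [← MeasureTheory.integral_const_mul]
    congr 1
    funext z
    rw [phi_inversion Φ φ hφ hφsupp z, MeasureTheory.integral_mul_const]
    ring
  rw [step1]
  -- Fubini
  have hunc : Integrable (Function.uncurry fun z w : EuclideanSpace ℝ (Fin n) =>
      Complex.exp (Complex.I * ((inner ℝ z w : ℝ):ℂ)) * φ w
        * (Ψ z * Complex.exp (Complex.I * ((inner ℝ z ζ : ℝ) : ℂ)))) 
      (volume.prod volume) := by
    apply Integrable.mono' ((Ψ.integrable.norm.mul_prod hφi.norm))
    · apply Continuous.aestronglyMeasurable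
      apply Continuous.mul
      · exact (Complex.continuous_exp.comp (continuous_const.mul
          (Complex.continuous_ofReal.comp continuous_inner))).mul
          (hφc.comp continuous_snd)
      · exact ((Ψ.continuous.comp continuous_fst)).mul
          (Complex.continuous_exp.comp (continuous_const.mul
            (Complex.continuous_ofReal.comp ((continuous_fst.inner continuous_const)))))
    · filter_upwards with p
      simp only [Function.uncurry]
      rw [norm_mul, norm_mul, norm_mul, norm_exp_I_real, norm_exp_I_real, one_mul, mul_one]
      exact le_of_eq (mul_comm _ _)
  rw [MeasureTheory.integral_integral_swap hunc]
  -- inner ℝ integral over z equals φ w * ψ (-(w+ζ)) ... then integral = 1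
  have hinner : ∀ w : EuclideanSpace ℝ (Fin n),
      (∫ z : EuclideanSpace ℝ (Fin n),
        Complex.exp (Complex.I * ((inner ℝ z w : ℝ):ℂ)) * φ w
          * (Ψ z * Complex.exp (Complex.I * ((inner ℝ z ζ : ℝ) : ℂ))))
      = φ w * ψ (-(w + ζ)) := by
    intro w
    have : ∀ z : EuclideanSpace ℝ (Fin n),
        Complex.exp (Complex.I * ((inner ℝ z w : ℝ):ℂ)) * φ w
          * (Ψ z * Complex.exp (Complex.I * ((inner ℝ z ζ : ℝ) : ℂ)))
        = φ w * (Complex.exp (-Complex.I * ((inner ℝ (-(w + ζ)) z : ℝ):ℂ)) * Ψ z) := by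
      intro z
      rw [inner_neg_left, inner_add_left, real_inner_comm w z, real_inner_comm ζ z]
      push_cast
      have hE : Complex.exp (-Complex.I * -(((inner ℝ w z : ℝ):ℂ) + ((inner ℝ ζ z : ℝ):ℂ)))
          = Complex.exp (Complex.I * ((inner ℝ w z : ℝ):ℂ))
            * Complex.exp (Complex.I * ((inner ℝ ζ z : ℝ):ℂ)) := by
        rw [← Complex.exp_add]; congr 1; ring
      rw [hE]
      ring
    simp only [this]
    rw [MeasureTheory.integral_const_mul, ← hψ (-(w + ζ))]
  simp only [hinner]
  have hpoint : ∀ w : EuclideanSpace ℝ (Fin n), φ w * ψ (-(w + ζ)) = φ w := by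
    intro w
    by_cases hw : 1/8 < ‖w‖
    · rw [hφsupp w hw, zero_mul]
    · push_neg at hw
      rw [hψone (-(w + ζ)) (by
        rw [norm_neg]
        calc ‖w + ζ‖ ≤ ‖w‖ + ‖ζ‖ := norm_add_le w ζ
        _ ≤ 1/8 + 1/8 := add_le_add hw hζ
        _ ≤ 1/4 := by norm_num), mul_one]
  simp only [hpoint]
  rw [hφint, mul_one]
end conv2

set_option maxHeartbeats 2000000 in
/-- `∫ Φ(λx−k) Ψ(λx−k) F⁻¹B(x) dx = (2π)^{−2n} λ^{−n} ∏ᵢ (sin(kᵢ/(2λ))/(kᵢ/(2λ)))²`. -/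
theorem stmt15 (n : ℕ) (hn : 0 < n)
    (Φ Ψ : SchwartzMap (EuclideanSpace ℝ (Fin n)) ℂ)
    (φ ψ : EuclideanSpace ℝ (Fin n) → ℂ)
    (hφ : ∀ ξ, φ ξ = ∫ t : EuclideanSpace ℝ (Fin n),
      Complex.exp (-Complex.I * ((inner ℝ ξ t : ℝ) : ℂ)) * Φ t)
    (hψ : ∀ ξ, ψ ξ = ∫ t : EuclideanSpace ℝ (Fin n),
      Complex.exp (-Complex.I * ((inner ℝ ξ t : ℝ) : ℂ)) * Ψ t)
    (hφsupp : ∀ ξ, 1 / 8 < ‖ξ‖ → φ ξ = 0)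
    (hφint : (∫ ξ : EuclideanSpace ℝ (Fin n), φ ξ) = 1)
    (hφrad : ∀ ξ ξ' : EuclideanSpace ℝ (Fin n), ‖ξ‖ = ‖ξ'‖ → φ ξ = φ ξ')
    (hψsupp : ∀ ξ, 1 / 2 < ‖ξ‖ → ψ ξ = 0)
    (hψone : ∀ ξ : EuclideanSpace ℝ (Fin n), ‖ξ‖ ≤ 1 / 4 → ψ ξ = 1) :
    ∀ (k : Fin n → ℤ) (lam : ℝ), 8 * Real.sqrt n ≤ lam →
      (∫ x : EuclideanSpace ℝ (Fin n),
        Φ (lam • x - latt k) * Ψ (lam • x - latt k) *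
          ((((2 * π) ^ (-(n : ℝ)) : ℝ) : ℂ) *
            ∫ ξ : EuclideanSpace ℝ (Fin n),
              Complex.exp (Complex.I * ((inner ℝ x ξ : ℝ) : ℂ)) * (Bspline n ξ : ℂ)))
      = ((((2 * π) ^ (-(2 * (n : ℝ))) * lam ^ (-(n : ℝ)) *
            ∏ i, (_root_.sinc ((k i : ℝ) / (2 * lam))) ^ 2) : ℝ) : ℂ) := by
  intro k lam hlam
  have hsqrtn : (0:ℝ) < Real.sqrt n := Real.sqrt_pos.2 (Nat.cast_pos.2 hn)
  have hlam0 : (0:ℝ) < lam := lt_of_lt_of_le (by positivity) hlam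
  have hlamne : lam ≠ 0 := hlam0.ne'
  set c1 : ℂ := (((2 * π) ^ (-(n : ℝ)) : ℝ) : ℂ) with hc1
  set val : ℂ := ((((2*π)^n : ℝ)⁻¹ : ℝ) : ℂ) with hval
  set Iin : EuclideanSpace ℝ (Fin n) → ℂ := fun x =>
    ∫ ξ : EuclideanSpace ℝ (Fin n),
      Complex.exp (Complex.I * ((inner ℝ x ξ : ℝ) : ℂ)) * (Bspline n ξ : ℂ) with hIin
  set F : EuclideanSpace ℝ (Fin n) → ℂ := fun x =>
    Φ (lam • x - latt k) * Ψ (lam • x - latt k) * (c1 * Iin x) with hF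
  show (∫ x, F x) = _
  -- Step A : change of variables
  have hA : (∫ x, F x) = (((lam ^ n : ℝ)⁻¹ : ℝ) : ℂ) * ∫ z, F (lam⁻¹ • (z + latt k)) := by
    have h1 := MeasureTheory.Measure.integral_comp_smul volume F lam⁻¹
    rw [finrank_euclideanSpace_fin] at h1
    have h2 : (∫ z, F (lam⁻¹ • (z + latt k))) = ∫ y, F (lam⁻¹ • y) :=
      integral_add_right_eq_self (fun y => F (lam⁻¹ • y)) (latt k)
    rw [h2, h1, abs_of_pos (by positivity : (0:ℝ) < ((lam⁻¹)^n)⁻¹), inv_pow, inv_inv,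
      Complex.real_smul, ← mul_assoc, ← Complex.ofReal_mul,
      inv_mul_cancel₀ (pow_ne_zero n hlamne), Complex.ofReal_one, one_mul]
  rw [hA]
  -- G : the product integrand
  set G : EuclideanSpace ℝ (Fin n) → EuclideanSpace ℝ (Fin n) → ℂ := fun z ξ =>
    (Φ z * Ψ z * Complex.exp (Complex.I * ((inner ℝ z (lam⁻¹ • ξ) : ℝ) : ℂ)))
      * (Complex.exp (Complex.I * ((lam⁻¹ * (inner ℝ (latt k) ξ : ℝ) : ℝ) : ℂ))
          * (Bspline n ξ : ℂ)) with hG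
  -- Step B : pointwise rewriting of the shifted integrand
  have hB : ∀ z, F (lam⁻¹ • (z + latt k)) = c1 * ∫ ξ, G z ξ := by
    intro z
    have harg : lam • (lam⁻¹ • (z + latt k)) - latt k = z := by
      rw [smul_smul, mul_inv_cancel₀ hlamne, one_smul, add_sub_cancel_right]
    have hIeq : Iin (lam⁻¹ • (z + latt k))
        = ∫ ξ, Complex.exp (Complex.I * ((inner ℝ z (lam⁻¹ • ξ) : ℝ) : ℂ))
            * (Complex.exp (Complex.I * ((lam⁻¹ * (inner ℝ (latt k) ξ : ℝ) : ℝ) : ℂ))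
              * (Bspline n ξ : ℂ)) := by
      rw [hIin]
      apply congrArg (MeasureTheory.integral volume)
      funext ξ
      have hi : (inner ℝ (lam⁻¹ • (z + latt k)) ξ : ℝ)
          = (inner ℝ z (lam⁻¹ • ξ) : ℝ) + lam⁻¹ * (inner ℝ (latt k) ξ : ℝ) := by
        rw [real_inner_smul_left, inner_add_left, real_inner_smul_right]
        ring
      rw [hi]
      push_cast
      rw [mul_add, Complex.exp_add]
      ring
    rw [hF]
    dsimp only
    rw [harg, hIeq]
    have hmul : (∫ ξ, G z ξ)
        = (Φ z * Ψ z) * ∫ ξ, Complex.exp (Complex.I * ((inner ℝ z (lam⁻¹ • ξ) : ℝ) : ℂ))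
            * (Complex.exp (Complex.I * ((lam⁻¹ * (inner ℝ (latt k) ξ : ℝ) : ℝ) : ℂ))
              * (Bspline n ξ : ℂ)) := by
      rw [← MeasureTheory.integral_const_mul]
      apply congrArg (MeasureTheory.integral volume)
      funext ξ
      simp only [hG]
      ring
    rw [hmul]
    ring
  simp only [hB]
  rw [MeasureTheory.integral_const_mul]
  -- Fubini
  have hΦΨ : Integrable (fun z => Φ z * Ψ z) := by
    apply Integrable.bdd_mul (c := ‖Φ.toBoundedContinuousFunction‖) Ψ.integrable Φ.continuous.aestronglyMeasurable
    refine Filter.Eventually.of_forall fun x => ?_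
    simpa using Φ.toBoundedContinuousFunction.norm_coe_le_norm x
  have hBC : Integrable (fun ξ : EuclideanSpace ℝ (Fin n) => (Bspline n ξ : ℂ)) :=
    (bspline_integrable n).ofReal
  have hGunc : Integrable (Function.uncurry G) (volume.prod volume) := by
    apply Integrable.mono' ((hΦΨ.norm.mul_prod hBC.norm))
    · apply Continuous.aestronglyMeasurable
      apply Continuous.mul
      · exact ((Φ.continuous.comp continuous_fst).mul (Ψ.continuous.comp continuous_fst)).mul
          (Complex.continuous_exp.comp (continuous_const.mul
            (Complex.continuous_ofReal.comp
              (continuous_fst.inner (continuous_snd.const_smul lam⁻¹)))))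
      · exact (Complex.continuous_exp.comp (continuous_const.mul
            (Complex.continuous_ofReal.comp
              (continuous_const.mul (continuous_const.inner continuous_snd))))).mul
          (Complex.continuous_ofReal.comp ((bspline_continuous n).comp continuous_snd))
    · filter_upwards with p
      simp only [Function.uncurry, hG, norm_mul, norm_exp_I_real, one_mul, mul_one]
      exact le_of_eq (by ring)
  rw [MeasureTheory.integral_integral_swap hGunc]
  -- inner ℝ z-integral
  have hzint : ∀ ξ : EuclideanSpace ℝ (Fin n),
      (∫ z, G z ξ) = val * (Complex.exp (Complex.I * ((lam⁻¹ * (inner ℝ (latt k) ξ : ℝ) : ℝ) : ℂ))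
          * (Bspline n ξ : ℂ)) := by
    intro ξ
    simp only [hG]
    rw [MeasureTheory.integral_mul_const]
    by_cases hBξ : Bspline n ξ = 0
    · rw [hBξ]
      push_cast
      ring
    · have hnorm : ‖lam⁻¹ • ξ‖ ≤ 1/8 := by
        rw [norm_smul, Real.norm_eq_abs, abs_of_pos (inv_pos.2 hlam0)]
        calc lam⁻¹ * ‖ξ‖ ≤ lam⁻¹ * Real.sqrt n := by
              apply mul_le_mul_of_nonneg_left (bspline_norm_le n ξ hBξ) (le_of_lt (inv_pos.2 hlam0))
        _ ≤ 1/8 := by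
              rw [inv_mul_le_iff₀ hlam0]
              linarith
      rw [conv_one Φ Ψ φ ψ hφ hψ hφsupp hφint hψone (lam⁻¹ • ξ) hnorm, hval]
      norm_cast
  simp only [hzint]
  rw [MeasureTheory.integral_const_mul]
  -- evaluate the remaining ξ-integral via intB
  have hfin : (∫ ξ : EuclideanSpace ℝ (Fin n),
      Complex.exp (Complex.I * ((lam⁻¹ * (inner ℝ (latt k) ξ : ℝ) : ℝ) : ℂ)) * (Bspline n ξ : ℂ))
      = ∏ i, (((_root_.sinc ((k i : ℝ) / (2*lam)))^2 : ℝ) : ℂ) := by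
    have h1 : ∀ ξ : EuclideanSpace ℝ (Fin n),
        (lam⁻¹ * (inner ℝ (latt k) ξ : ℝ) : ℝ) = (inner ℝ (lam⁻¹ • latt k) ξ : ℝ) := by
      intro ξ; rw [real_inner_smul_left]
    simp only [h1]
    rw [intB n (lam⁻¹ • latt k)]
    apply Finset.prod_congr rfl
    intro i _
    have h2 : (lam⁻¹ • latt k) i / 2 = (k i : ℝ) / (2*lam) := by
      have : (lam⁻¹ • latt k) i = lam⁻¹ * (k i : ℝ) := rfl
      rw [this, inv_mul_eq_div, div_div, mul_comm lam 2]
    rw [h2]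
  rw [hfin]
  -- final constants
  rw [← Complex.ofReal_prod]
  rw [hc1, hval]
  rw [← Complex.ofReal_mul, ← Complex.ofReal_mul, ← Complex.ofReal_mul]
  congr 1
  have e1 : (2*π:ℝ) ^ (-(n:ℝ)) = ((2*π:ℝ)^n)⁻¹ := by
    rw [Real.rpow_neg (by positivity), Real.rpow_natCast]
  have e2 : lam ^ (-(n:ℝ)) = ((lam:ℝ)^n)⁻¹ := by
    rw [Real.rpow_neg hlam0.le, Real.rpow_natCast]
  have e3 : (2*π:ℝ) ^ (-(2*(n:ℝ))) = (((2*π:ℝ)^n)⁻¹)^2 := by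
    rw [show -(2*(n:ℝ)) = -((2*n:ℕ):ℝ) by push_cast; ring, Real.rpow_neg (by positivity),
      Real.rpow_natCast, show 2*n = n*2 from mul_comm 2 n, pow_mul, inv_pow]
  rw [e1, e2, e3]
  ring
end
end
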